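/- Let N ≥ 3 be an integer, p > 2, K ≥ 1 an integer, and γ ∈ [0, γ_p). Then the linearized equation −(e^{−γt}v'(t))' − (p−1)e^{−t}|U_γ(t)|^{p−2}v(t) = 0 on [0,∞) with v(0) = 0 has no bounded C² solution other than v ≡ 0. -/

import Mathlib

/-!
For `c = (γ - 1)/(p - 2)`, problem `(P_γ)` is invariant under the scaling `U ↦ e^{cs} U(· + s)`,
so its generator `Z = U' + c U` solves the linearized equation, and the Wronskian
`e^{-γt} (v' Z - Z' v)` of `v` and `Z` is constant. For a bounded solution `y` of either equation
the flux `e^{-γt} y'` has derivative `O(e^{-t})`, hence a limit, which must be `0` because `y` is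
bounded and `γ ≥ 0`; so the flux is `O(e^{-t})`, and for `γ ≤ 1` this also bounds `U'`. Thus the
Wronskian tends to `0`, while at `t = 0` it equals `v'(0) U'(0)`. If `U'(0) = 0`, then `U ≡ 0` by
uniqueness for the linear equation `-(e^{-γt}U')' = (e^{-t}|U|^{p-2}) U`, contradicting
`U → L > 0`; hence `v'(0) = 0`, and `v ≡ 0` by uniqueness again.
-/

open Real Filter Set MeasureTheory Asymptotics

noncomputable section

/-- `α_p = max{((N−2)p − 2N)/2, 0}`. -/
def alphaP (N : ℕ) (p : ℝ) : ℝ := max ((((N : ℝ) - 2) * p - 2 * (N : ℝ)) / 2) 0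

/-- `γ_p = (N−2)/(N+α_p)`. -/
def gammaP (N : ℕ) (p : ℝ) : ℝ := ((N : ℝ) - 2) / ((N : ℝ) + alphaP N p)

/-- `U` is bounded on `[0,∞)`. -/
def BddOn (U : ℝ → ℝ) : Prop := ∃ C : ℝ, ∀ t, 0 ≤ t → |U t| ≤ C

/-- `U` is a C² solution of problem (P_γ):
`−(e^{−γt}U')' = e^{−t}|U|^{p−2}U` on `[0,∞)`, `U(0) = 0`. -/
def SolP (p γ : ℝ) (U : ℝ → ℝ) : Prop :=
  ContDiff ℝ 2 U ∧ U 0 = 0 ∧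
  ∀ t : ℝ, 0 ≤ t →
    deriv (fun s => Real.exp (-γ * s) * deriv U s) t
      = -(Real.exp (-t) * |U t| ^ (p - 2) * U t)

/-- `U` has exactly `m` zeros in `(0,∞)`. -/
def ZeroCount (U : ℝ → ℝ) (m : ℕ) : Prop :=
  {t : ℝ | 0 < t ∧ U t = 0}.Finite ∧ {t : ℝ | 0 < t ∧ U t = 0}.ncard = m

/-- characterization of `U_γ`: bounded solution of (P_γ) with exactly `K−1`
zeros in `(0,∞)` and positive limit at `+∞`. -/
def IsUsol (p γ : ℝ) (K : ℕ) (U : ℝ → ℝ) : Prop :=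
  SolP p γ U ∧ BddOn U ∧ ZeroCount U (K - 1) ∧
    ∃ L : ℝ, 0 < L ∧ Filter.Tendsto U Filter.atTop (nhds L)

/-- `Ψ` is a bounded solution of the linearized eigenvalue problem (E_γ) with
eigenvalue `ν`: `−(e^{−γt}Ψ')' − (p−1)e^{−t}|U_γ|^{p−2}Ψ = ν e^{−γt}Ψ`, `Ψ(0)=0`. -/
def EigenEq (p γ : ℝ) (U : ℝ → ℝ) (ν : ℝ) (Ψ : ℝ → ℝ) : Prop :=
  ContDiff ℝ 2 Ψ ∧ Ψ 0 = 0 ∧ BddOn Ψ ∧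
  ∀ t : ℝ, 0 ≤ t →
    deriv (fun s => Real.exp (-γ * s) * deriv Ψ s) t
      = -((p - 1) * Real.exp (-t) * |U t| ^ (p - 2) * Ψ t + ν * Real.exp (-γ * t) * Ψ t)

/-- nontrivial on `[0,∞)`. -/
def Nontriv (Ψ : ℝ → ℝ) : Prop := ∃ t : ℝ, 0 ≤ t ∧ Ψ t ≠ 0

/-- `ν` is a negative eigenvalue of (E_γ). -/
def IsNegEigen (p γ : ℝ) (K : ℕ) (ν : ℝ) : Prop :=
  ν < 0 ∧ ∀ U : ℝ → ℝ, IsUsol p γ K U → ∃ Ψ, EigenEq p γ U ν Ψ ∧ Nontriv Ψ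

/-- `ν j γ` (for `1 ≤ j ≤ K`) enumerates the negative eigenvalues of (E_γ)
in strictly increasing order. -/
def Enumerates (p : ℝ) (K : ℕ) (γP : ℝ) (ν : ℕ → ℝ → ℝ) : Prop :=
  ∀ γ : ℝ, 0 ≤ γ → γ < γP →
    (∀ j j' : ℕ, 1 ≤ j → j < j' → j' ≤ K → ν j γ < ν j' γ) ∧
    (∀ j : ℕ, 1 ≤ j → j ≤ K → IsNegEigen p γ K (ν j γ)) ∧
    (∀ μ : ℝ, IsNegEigen p γ K μ → ∃ j : ℕ, 1 ≤ j ∧ j ≤ K ∧ μ = ν j γ)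

open Topology

theorem hasDerivAt_abs_rpow_mul_self {q : ℝ} (hq : 0 < q) (x : ℝ) :
    HasDerivAt (fun y => |y| ^ q * y) ((q + 1) * |x| ^ q) x := by
  rcases lt_trichotomy x 0 with hx | rfl | hx
  · have h := ((hasDerivAt_rpow_const (p := q + 1) (Or.inl (neg_ne_zero.mpr hx.ne))).comp x
      (hasDerivAt_neg x)).neg
    refine (h.congr_of_eventuallyEq ?_).congr_deriv (by simp [abs_of_neg hx])
    filter_upwards [Iio_mem_nhds hx] with y hy
    rw [mem_Iio] at hy
    simp only [Function.comp_apply, Pi.neg_apply, abs_of_neg hy,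
      rpow_add_one (neg_ne_zero.mpr hy.ne)]
    ring
  · rw [hasDerivAt_iff_isLittleO_nhds_zero]
    have h : Tendsto (fun h : ℝ => |h| ^ q) (𝓝 0) (𝓝 0) := by
      simpa [zero_rpow hq.ne'] using
        ((continuous_abs.rpow_const fun _ => Or.inr hq.le).tendsto (0 : ℝ))
    simpa [zero_rpow hq.ne'] using
      ((isLittleO_one_iff ℝ).mpr h).mul_isBigO (isBigO_refl (fun h : ℝ => h) (𝓝 0))
  · have h := hasDerivAt_rpow_const (p := q + 1) (Or.inl hx.ne')
    refine (h.congr_of_eventuallyEq ?_).congr_deriv (by simp [abs_of_pos hx])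
    filter_upwards [Ioi_mem_nhds hx] with y hy
    rw [abs_of_pos hy, rpow_add_one hy.ne']

theorem gammaP_lt_one {N : ℕ} (hN : 0 < N) (p : ℝ) : gammaP N p < 1 := by
  have hα : 0 ≤ alphaP N p := le_max_right _ _
  have hN' : (0 : ℝ) < N := by exact_mod_cast hN
  rw [gammaP, div_lt_one (by linarith)]
  linarith

theorem BddOn.exists_nonneg {y : ℝ → ℝ} (hy : BddOn y) :
    ∃ C, 0 ≤ C ∧ ∀ t, 0 ≤ t → |y t| ≤ C :=
  let ⟨C, hC⟩ := hy
  ⟨C, (abs_nonneg _).trans (hC 0 le_rfl), hC⟩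

theorem not_bddOn_of_le_deriv {y y' : ℝ → ℝ} {t₀ δ : ℝ} (hδ : 0 < δ)
    (hy : ∀ t, t₀ ≤ t → HasDerivAt y (y' t) t) (hle : ∀ t, t₀ ≤ t → δ ≤ y' t) :
    ¬ BddOn y := by
  intro hb
  obtain ⟨C, hC0, hC⟩ := hb.exists_nonneg
  set t₁ := max t₀ 0
  have hmono : MonotoneOn (fun t => y t - δ * t) (Ici t₀) := by
    refine monotoneOn_of_hasDerivWithinAt_nonneg (convex_Ici t₀)
      (fun t ht => ((hy t ht).continuousAt.sub
        (continuousAt_const.mul continuousAt_id)).continuousWithinAt)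
      (fun t ht => ((hy t (le_of_lt ?_)).sub ((hasDerivAt_id t).const_mul δ)).hasDerivWithinAt)
      (fun t ht => ?_)
    · simpa using ht
    · simp only [interior_Ici, mem_Ioi] at ht
      simpa using hle t ht.le
  set s := t₁ + (2 * C + 1) / δ
  have hs : t₁ ≤ s := le_add_of_nonneg_right (by positivity)
  have hgrow := hmono (le_max_left t₀ 0 : t₀ ≤ t₁) ((le_max_left t₀ 0).trans hs) hs
  have hδs : δ * s - δ * t₁ = 2 * C + 1 := by simp only [s]; field_simp; ring
  have h1 := abs_le.mp (hC t₁ (le_max_right _ _))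
  have h2 := abs_le.mp (hC s ((le_max_right _ _).trans hs))
  simp only at hgrow
  linarith

theorem flux_le_of_bddOn {γ K : ℝ} {y g : ℝ → ℝ} (hγ : 0 ≤ γ) (hyb : BddOn y)
    (hy : Differentiable ℝ y)
    (hP : ∀ t, 0 ≤ t → HasDerivAt (fun s => exp (-γ * s) * deriv y s) (g t) t)
    (hg : ∀ t, 0 ≤ t → |g t| ≤ K * exp (-t)) (t : ℝ) (ht : 0 ≤ t) :
    exp (-γ * t) * deriv y t ≤ K * exp (-t) := by
  set P := fun s => exp (-γ * s) * deriv y s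
  have hK : 0 ≤ K := nonneg_of_mul_nonneg_left ((abs_nonneg _).trans (hg 0 le_rfl)) (exp_pos _)
  -- `P s - K e^{-s}` is nondecreasing, so once positive it keeps `y'` away from `0`
  have hmono : MonotoneOn (fun s => P s - K * exp (-s)) (Ici 0) := by
    have hexp (s : ℝ) : HasDerivAt (fun s => K * exp (-s)) (-(K * exp (-s))) s := by
      simpa using ((hasDerivAt_neg s).exp).const_mul K
    refine monotoneOn_of_hasDerivWithinAt_nonneg (convex_Ici 0)
      (fun s hs => ((hP s hs).continuousAt.sub (hexp s).continuousAt).continuousWithinAt)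
      (fun s hs => ((hP s (interior_subset hs)).sub (hexp s)).hasDerivWithinAt)
      (fun s hs => ?_)
    have := neg_le_of_abs_le (hg s (interior_subset hs))
    linarith
  by_contra! hlt
  refine not_bddOn_of_le_deriv (t₀ := t) (sub_pos.mpr hlt) (fun s _ => (hy s).hasDerivAt)
    (fun s hs => ?_) hyb
  have hPs : P t - K * exp (-t) ≤ P s - K * exp (-s) := hmono ht (ht.trans hs) hs
  have hKs : 0 ≤ K * exp (-s) := by positivity
  have hys : deriv y s = exp (γ * s) * P s := by
    simp only [P, ← mul_assoc, ← exp_add]; ring_nf; simp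
  have : 1 ≤ exp (γ * s) := one_le_exp (mul_nonneg hγ (ht.trans hs))
  rw [hys]
  nlinarith

theorem abs_flux_le_of_bddOn {γ K : ℝ} {y g : ℝ → ℝ} (hγ : 0 ≤ γ) (hyb : BddOn y)
    (hy : Differentiable ℝ y)
    (hP : ∀ t, 0 ≤ t → HasDerivAt (fun s => exp (-γ * s) * deriv y s) (g t) t)
    (hg : ∀ t, 0 ≤ t → |g t| ≤ K * exp (-t)) (t : ℝ) (ht : 0 ≤ t) :
    |exp (-γ * t) * deriv y t| ≤ K * exp (-t) := by
  refine abs_le.mpr ⟨?_, flux_le_of_bddOn hγ hyb hy hP hg t ht⟩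
  have hyb' : BddOn (fun s => -y s) :=
    let ⟨C, hC⟩ := hyb; ⟨C, fun s hs => by simpa using hC s hs⟩
  have hd : deriv (fun s => -y s) = fun s => -deriv y s := funext fun s => deriv.neg
  have hP' (s : ℝ) (hs : 0 ≤ s) :
      HasDerivAt (fun s => exp (-γ * s) * deriv (fun s => -y s) s) (-g s) s := by
    simp only [hd, mul_neg]
    exact (hP s hs).neg
  have := flux_le_of_bddOn hγ hyb' hy.neg hP' (fun s hs => by simpa using hg s hs) t ht
  simp only [hd, mul_neg] at this
  linarith

theorem eq_zero_of_hasDerivAt_flux {γ : ℝ} {y q : ℝ → ℝ} (hy : Differentiable ℝ y)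
    (hq : ContinuousOn q (Ici 0))
    (hP : ∀ t, 0 ≤ t → HasDerivAt (fun s => exp (-γ * s) * deriv y s) (-(q t * y t)) t)
    (hy0 : y 0 = 0) (hy0' : deriv y 0 = 0) (T : ℝ) (hT : 0 ≤ T) : y T = 0 := by
  obtain ⟨Q, hQ⟩ := (isCompact_Icc (a := 0) (b := T)).exists_bound_of_continuousOn
    (hq.mono fun _ hs => hs.1)
  -- Gronwall for the first-order system satisfied by `(y, e^{-γt} y')`
  set f : ℝ → ℝ × ℝ := fun s => (y s, exp (-γ * s) * deriv y s)
  have hf (s : ℝ) (hs : 0 ≤ s) : HasDerivAt f (deriv y s, -(q s * y s)) s :=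
    (hy s).hasDerivAt.prodMk (hP s hs)
  have hbound (s : ℝ) (hs : s ∈ Icc 0 T) :
      ‖((deriv y s, -(q s * y s)) : ℝ × ℝ)‖ ≤ (exp (|γ| * T) + Q) * ‖f s‖ := by
    have hfst : |y s| ≤ ‖f s‖ := norm_fst_le (f s)
    have hsnd : |exp (-γ * s) * deriv y s| ≤ ‖f s‖ := norm_snd_le (f s)
    have hexp : exp (γ * s) ≤ exp (|γ| * T) :=
      exp_le_exp.mpr (mul_le_mul (le_abs_self γ) hs.2 hs.1 (abs_nonneg γ))
    have hQ0 : 0 ≤ Q := (norm_nonneg _).trans (hQ 0 ⟨le_rfl, hT⟩)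
    have hy' : deriv y s = exp (γ * s) * (exp (-γ * s) * deriv y s) := by
      rw [← mul_assoc, ← exp_add]; ring_nf; simp
    rw [Prod.norm_def, Real.norm_eq_abs, Real.norm_eq_abs]
    refine max_le ?_ ?_
    · rw [hy', abs_mul, abs_exp]
      nlinarith [norm_nonneg (f s), exp_pos (|γ| * T), exp_pos (γ * s),
        abs_nonneg (exp (-γ * s) * deriv y s)]
    · rw [abs_neg, abs_mul]
      have := hQ s hs
      rw [Real.norm_eq_abs] at this
      nlinarith [norm_nonneg (f s), exp_pos (|γ| * T), abs_nonneg (y s), abs_nonneg (q s)]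
  have := eq_zero_of_abs_deriv_le_mul_abs_self_of_eq_zero_right
    (fun s hs => (hf s hs.1).continuousAt.continuousWithinAt)
    (fun s hs => (hf s hs.1).hasDerivWithinAt) (by simp [f, hy0, hy0'])
    (fun s hs => hbound s (Ico_subset_Icc_self hs)) T ⟨hT, le_rfl⟩
  exact congrArg Prod.fst this

theorem hasDerivAt_wronskian {y z P R : ℝ → ℝ} {t ρ q y₁ z₁ : ℝ}
    (hy : HasDerivAt y y₁ t) (hz : HasDerivAt z z₁ t)
    (hP : HasDerivAt P (-(q * y t)) t) (hR : HasDerivAt R (-(q * z t)) t)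
    (hPy : P t = ρ * y₁) (hRz : R t = ρ * z₁) :
    HasDerivAt (fun s => P s * z s - R s * y s) 0 t :=
  ((hP.mul hz).sub (hR.mul hy)).congr_deriv (by rw [hPy, hRz]; ring)

theorem eq_of_hasDerivAt_zero_of_tendsto {W : ℝ → ℝ} {l : ℝ}
    (hW : ∀ t, 0 ≤ t → HasDerivAt W 0 t) (hlim : Tendsto W atTop (𝓝 l)) : W 0 = l := by
  have hconst (t : ℝ) (ht : 0 ≤ t) : W t = W 0 :=
    constant_of_has_deriv_right_zero (fun s hs => (hW s hs.1).continuousAt.continuousWithinAt)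
      (fun s hs => (hW s hs.1).hasDerivWithinAt) t ⟨ht, le_rfl⟩
  exact tendsto_nhds_unique
    (tendsto_const_nhds.congr' (eventually_atTop.2 ⟨0, fun t ht => (hconst t ht).symm⟩)) hlim

theorem tendsto_zero_of_abs_le_mul_exp_neg {f : ℝ → ℝ} {K : ℝ}
    (h : ∀ t, 0 ≤ t → |f t| ≤ K * exp (-t)) : Tendsto f atTop (𝓝 0) :=
  squeeze_zero_norm' (eventually_atTop.2 ⟨0, h⟩)
    (by simpa using tendsto_exp_neg_atTop_nhds_zero.const_mul K)

theorem BddOn.isBoundedUnder {f : ℝ → ℝ} (hf : BddOn f) :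
    IsBoundedUnder (· ≤ ·) atTop (norm ∘ f) :=
  let ⟨_, hC⟩ := hf
  isBoundedUnder_of_eventually_le (eventually_atTop.2 ⟨0, hC⟩)

theorem abs_exp_neg_mul_rpow_mul_le {r M C t u y : ℝ} (hr : 0 ≤ r) (hu : |u| ≤ M)
    (hy : |y| ≤ C) :
    |exp (-t) * |u| ^ r * y| ≤ M ^ r * C * exp (-t) := by
  rw [abs_mul, abs_mul, abs_exp, abs_of_nonneg (rpow_nonneg (abs_nonneg u) r)]
  have := mul_le_mul (rpow_le_rpow (abs_nonneg u) hu hr) hy (abs_nonneg y)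
    (rpow_nonneg ((abs_nonneg u).trans hu) r)
  nlinarith [exp_pos (-t)]

theorem abs_le_of_abs_flux_le {γ K t y' : ℝ} (hγ : γ ≤ 1) (ht : 0 ≤ t)
    (h : |exp (-γ * t) * y'| ≤ K * exp (-t)) : |y'| ≤ K := by
  have hK : 0 ≤ K := nonneg_of_mul_nonneg_left ((abs_nonneg _).trans h) (exp_pos _)
  have hy' : |y'| = exp (γ * t) * |exp (-γ * t) * y'| := by
    rw [abs_mul, abs_exp, ← mul_assoc, ← exp_add]; ring_nf; simp
  calc |y'| ≤ exp (γ * t) * (K * exp (-t)) := hy' ▸ mul_le_mul_of_nonneg_left h (exp_pos _).le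
    _ = K * exp ((γ - 1) * t) := by rw [mul_left_comm, ← exp_add]; ring_nf
    _ ≤ K := mul_le_of_le_one_right hK (exp_le_one_iff.mpr (by nlinarith))

theorem ContDiff.hasDerivAt_flux {y : ℝ → ℝ} (hy : ContDiff ℝ 2 y) (γ t : ℝ) :
    HasDerivAt (fun s => Real.exp (-γ * s) * deriv y s)
      (deriv (fun s => Real.exp (-γ * s) * deriv y s) t) t :=
  ((by fun_prop : DifferentiableAt ℝ (fun s => Real.exp (-γ * s)) t).mul
    (hy.differentiable_deriv_two t)).hasDerivAt

/-- The flux `e^{-γt} Z'` of `Z = U' + c U`, written without `U''` so that it is differentiable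
when `U` is only `C²`. For `c (p - 2) = γ - 1`, `Z` generates the scaling symmetry
`U ↦ e^{cs} U(· + s)` of `(P_γ)`, hence solves the linearized equation. -/
def scalingFlux (p γ c : ℝ) (U : ℝ → ℝ) (t : ℝ) : ℝ :=
  (γ + c) * (exp (-γ * t) * deriv U t) - exp (-t) * (|U t| ^ (p - 2) * U t)

namespace SolP

variable {p γ : ℝ} {U : ℝ → ℝ}

theorem contDiff (hU : SolP p γ U) : ContDiff ℝ 2 U := hU.1

theorem hasDerivAt_flux (hU : SolP p γ U) {t : ℝ} (ht : 0 ≤ t) :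
    HasDerivAt (fun s => exp (-γ * s) * deriv U s) (-(exp (-t) * |U t| ^ (p - 2) * U t)) t :=
  hU.2.2 t ht ▸ hU.contDiff.hasDerivAt_flux γ t

theorem eq_zero_of_deriv_zero (hU : SolP p γ U) (hp : 2 ≤ p) (h : deriv U 0 = 0)
    (t : ℝ) (ht : 0 ≤ t) : U t = 0 :=
  eq_zero_of_hasDerivAt_flux (q := fun t => exp (-t) * |U t| ^ (p - 2))
    (hU.contDiff.differentiable (by norm_num))
    ((continuous_exp.comp continuous_neg).mul
      ((hU.contDiff.continuous.abs).rpow_const fun _ => Or.inr (by linarith))).continuousOn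
    (fun _ => hU.hasDerivAt_flux) hU.2.1 h t ht

theorem abs_flux_le (hU : SolP p γ U) (hp : 2 ≤ p) (hγ : 0 ≤ γ) {M : ℝ}
    (hM : ∀ t, 0 ≤ t → |U t| ≤ M) (t : ℝ) (ht : 0 ≤ t) :
    |exp (-γ * t) * deriv U t| ≤ M ^ (p - 2) * M * exp (-t) :=
  abs_flux_le_of_bddOn hγ ⟨M, hM⟩ (hU.contDiff.differentiable (by norm_num))
    (fun _ => hU.hasDerivAt_flux) (fun s hs => by
      rw [abs_neg]; exact abs_exp_neg_mul_rpow_mul_le (by linarith) (hM s hs) (hM s hs)) t ht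

theorem scalingFlux_eq (hU : SolP p γ U) (c : ℝ) {t : ℝ} (ht : 0 ≤ t) :
    scalingFlux p γ c U t = exp (-γ * t) * (deriv (deriv U) t + c * deriv U t) := by
  have hprod : HasDerivAt (fun s => exp (-γ * s) * deriv U s)
      (-γ * exp (-γ * t) * deriv U t + exp (-γ * t) * deriv (deriv U) t) t :=
    (((hasDerivAt_id' t).const_mul (-γ)).exp.mul
      (hU.contDiff.differentiable_deriv_two t).hasDerivAt).congr_deriv (by ring)
  have := hprod.unique (hU.hasDerivAt_flux ht)
  unfold scalingFlux
  linear_combination -this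

theorem hasDerivAt_scalingFlux (hU : SolP p γ U) (hp : 2 < p) {c : ℝ} (hc : c * (p - 2) = γ - 1)
    {t : ℝ} (ht : 0 ≤ t) :
    HasDerivAt (scalingFlux p γ c U)
      (-((p - 1) * exp (-t) * |U t| ^ (p - 2) * (deriv U t + c * U t))) t := by
  have hF : HasDerivAt (fun s => |U s| ^ (p - 2) * U s)
      ((p - 2 + 1) * |U t| ^ (p - 2) * deriv U t) t :=
    (hasDerivAt_abs_rpow_mul_self (by linarith) (U t)).comp t
      ((hU.contDiff.differentiable (by norm_num)) t).hasDerivAt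
  have he : HasDerivAt (fun s => exp (-s)) (-exp (-t)) t := by
    simpa using (hasDerivAt_neg t).exp
  exact (((hU.hasDerivAt_flux ht).const_mul (γ + c)).sub (he.mul hF)).congr_deriv
    (by linear_combination hc * (Real.exp (-t) * |U t| ^ (p - 2) * U t))

theorem deriv_mul_deriv_eq_zero (hU : SolP p γ U) (hUb : BddOn U) (hp : 2 < p) (hγ0 : 0 ≤ γ)
    (hγ1 : γ ≤ 1) {v : ℝ → ℝ} (hv2 : ContDiff ℝ 2 v) (hv0 : v 0 = 0) (hvb : BddOn v)
    (hveq : ∀ t, 0 ≤ t → deriv (fun s => exp (-γ * s) * deriv v s) t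
      = -((p - 1) * exp (-t) * |U t| ^ (p - 2) * v t)) :
    deriv v 0 * deriv U 0 = 0 := by
  obtain ⟨M, hM⟩ := hUb
  have ⟨C, hC⟩ := hvb
  set c := (γ - 1) / (p - 2)
  have hc : c * (p - 2) = γ - 1 := div_mul_cancel₀ _ (by linarith)
  have hPv (t : ℝ) (ht : 0 ≤ t) : HasDerivAt (fun s => exp (-γ * s) * deriv v s)
      (-((p - 1) * exp (-t) * |U t| ^ (p - 2) * v t)) t :=
    hveq t ht ▸ hv2.hasDerivAt_flux γ t
  have hZ (t : ℝ) : HasDerivAt (fun s => deriv U s + c * U s)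
      (deriv (deriv U) t + c * deriv U t) t :=
    (hU.contDiff.differentiable_deriv_two t).hasDerivAt.add
      (((hU.contDiff.differentiable (by norm_num)) t).hasDerivAt.const_mul c)
  -- the Wronskian of `v` and `Z = U' + c U`
  set W := fun s =>
    exp (-γ * s) * deriv v s * (deriv U s + c * U s) - scalingFlux p γ c U s * v s
  have hW (t : ℝ) (ht : 0 ≤ t) : HasDerivAt W 0 t :=
    hasDerivAt_wronskian ((hv2.differentiable (by norm_num)) t).hasDerivAt (hZ t) (hPv t ht)
      (hU.hasDerivAt_scalingFlux hp hc ht) rfl (hU.scalingFlux_eq c ht)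
  have hUflux := hU.abs_flux_le hp.le hγ0 hM
  have hvflux (t : ℝ) (ht : 0 ≤ t) :
      |exp (-γ * t) * deriv v t| ≤ (p - 1) * (M ^ (p - 2) * C) * exp (-t) :=
    abs_flux_le_of_bddOn hγ0 hvb (hv2.differentiable (by norm_num)) hPv (fun s hs => by
      rw [abs_neg, mul_assoc (p - 1), mul_assoc (p - 1), mul_assoc (p - 1), abs_mul,
        abs_of_pos (by linarith : 0 < p - 1)]
      exact mul_le_mul_of_nonneg_left
        (abs_exp_neg_mul_rpow_mul_le (by linarith) (hM s hs) (hC s hs)) (by linarith)) t ht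
  have hZb : BddOn fun s => deriv U s + c * U s :=
    ⟨M ^ (p - 2) * M + |c| * M, fun t ht => (abs_add_le _ _).trans (add_le_add
      (abs_le_of_abs_flux_le hγ1 ht (hUflux t ht))
      (by rw [abs_mul]; exact mul_le_mul_of_nonneg_left (hM t ht) (abs_nonneg c)))⟩
  have hflux0 : Tendsto (scalingFlux p γ c U) atTop (𝓝 0) := by
    have hF : Tendsto (fun t => exp (-t) * (|U t| ^ (p - 2) * U t)) atTop (𝓝 0) :=
      tendsto_zero_of_abs_le_mul_exp_neg fun t ht => by
        rw [← mul_assoc]; exact abs_exp_neg_mul_rpow_mul_le (by linarith) (hM t ht) (hM t ht)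
    have := ((tendsto_zero_of_abs_le_mul_exp_neg hUflux).const_mul (γ + c)).sub hF
    rwa [mul_zero, sub_zero] at this
  have hWlim : Tendsto W atTop (𝓝 0) := by
    simpa only [sub_zero] using
      ((tendsto_zero_of_abs_le_mul_exp_neg hvflux).zero_mul_isBoundedUnder_le
        hZb.isBoundedUnder).sub (hflux0.zero_mul_isBoundedUnder_le hvb.isBoundedUnder)
  simpa [W, hv0, hU.2.1] using eq_of_hasDerivAt_zero_of_tendsto hW hWlim

end SolP

theorem stmt3_general (N : ℕ) (hN : 3 ≤ N) (p : ℝ) (hp : 2 < p) (K : ℕ)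
    (γ : ℝ) (hγ0 : 0 ≤ γ) (hγ1 : γ < gammaP N p)
    (U : ℝ → ℝ) (hU : IsUsol p γ K U)
    (v : ℝ → ℝ) (hv2 : ContDiff ℝ 2 v) (hv0 : v 0 = 0) (hvb : BddOn v)
    (hveq : ∀ t : ℝ, 0 ≤ t →
      deriv (fun s => Real.exp (-γ * s) * deriv v s) t
        = -((p - 1) * Real.exp (-t) * |U t| ^ (p - 2) * v t)) :
    ∀ t : ℝ, 0 ≤ t → v t = 0 := by
  obtain ⟨hU, hUb, -, L, hL, hUlim⟩ := hU
  have hγ : γ ≤ 1 := (hγ1.trans (gammaP_lt_one (by omega) p)).le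
  rcases mul_eq_zero.mp (hU.deriv_mul_deriv_eq_zero hUb hp hγ0 hγ hv2 hv0 hvb hveq) with hv' | hU'
  · exact eq_zero_of_hasDerivAt_flux (q := fun t => (p - 1) * exp (-t) * |U t| ^ (p - 2))
      (hv2.differentiable (by norm_num))
      ((continuous_const.mul (continuous_exp.comp continuous_neg)).mul
        ((hU.contDiff.continuous.abs).rpow_const fun _ => Or.inr (by linarith))).continuousOn
      (fun t ht => hveq t ht ▸ hv2.hasDerivAt_flux γ t) hv0 hv'
  · have hU0 : Tendsto U atTop (𝓝 0) := tendsto_const_nhds.congr'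
      (eventually_atTop.2 ⟨0, fun t ht => (hU.eq_zero_of_deriv_zero hp.le hU' t ht).symm⟩)
    exact absurd (tendsto_nhds_unique hUlim hU0) hL.ne'

/-- nondegeneracy of `U_γ` for `γ ∈ [0, γ_p)`: the linearized
equation `−(e^{−γt}v')' − (p−1)e^{−t}|U_γ|^{p−2}v = 0`, `v(0)=0`, has no
bounded C² solution other than `v ≡ 0` on `[0,∞)`. -/
theorem stmt3 (N : ℕ) (hN : 3 ≤ N) (p : ℝ) (hp : 2 < p) (K : ℕ) (hK : 1 ≤ K)
    (γ : ℝ) (hγ0 : 0 ≤ γ) (hγ1 : γ < gammaP N p)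
    (U : ℝ → ℝ) (hU : IsUsol p γ K U)
    (v : ℝ → ℝ) (hv2 : ContDiff ℝ 2 v) (hv0 : v 0 = 0) (hvb : BddOn v)
    (hveq : ∀ t : ℝ, 0 ≤ t →
      deriv (fun s => Real.exp (-γ * s) * deriv v s) t
        = -((p - 1) * Real.exp (-t) * |U t| ^ (p - 2) * v t)) :
    ∀ t : ℝ, 0 ≤ t → v t = 0 :=
  stmt3_general N hN p hp K γ hγ0 hγ1 U hU v hv2 hv0 hvb hveq
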